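/- arXiv:math/0602365 — 4 statements merged into one kernel-verified Lean document; each statement's English description precedes it below -/
import Mathlib

section
/- For x > 0 and y < 0, define τ₋(x,y) = (x² − 6y)^{1/2} − x and S₋(x,y) = (2/3)(x²/τ₋(x,y) + τ₋(x,y)) − x/3. Then τ₋(x,y) > 0, S₋ is differentiable on {(x,y) : x > 0, y < 0}, and S₋ satisfies the Hamilton–Jacobi equation −x ∂S₋/∂y + ½ (∂S₋/∂x)² = ½ there. -/
/-- For `x > 0` and `y < 0`, define `τ₋(x,y) = (x² − 6y)^(1/2) − x` and
`S₋(x,y) = (2/3)(x²/τ₋ + τ₋) − x/3`.  Then `τ₋(x,y) > 0`, `S₋` is differentiable on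
`{(x,y) : x > 0, y < 0}`, and `S₋` satisfies the Hamilton–Jacobi equation
`−x ∂S₋/∂y + ½ (∂S₋/∂x)² = ½` there. -/
theorem stmt_7 :
    let τ : ℝ → ℝ → ℝ := fun x y => Real.sqrt (x ^ 2 - 6 * y) - x
    let S : ℝ → ℝ → ℝ := fun x y => (2/3) * (x ^ 2 / τ x y + τ x y) - x / 3
    ∀ x y : ℝ, 0 < x → y < 0 →
      0 < τ x y ∧
      DifferentiableAt ℝ (fun p : ℝ × ℝ => S p.1 p.2) (x, y) ∧
      -x * deriv (fun y' => S x y') y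
        + (1/2) * (deriv (fun x' => S x' y) x) ^ 2 = 1/2 := by
  intro τ S x y hx hy
  set r : ℝ := Real.sqrt (x ^ 2 - 6 * y) with hrdef
  have harg : (0:ℝ) < x ^ 2 - 6 * y := by nlinarith
  have hr2 : r ^ 2 = x ^ 2 - 6 * y := Real.sq_sqrt harg.le
  have hrpos : 0 < r := Real.sqrt_pos.mpr harg
  have hxr : x < r := by nlinarith
  have htpos : 0 < τ x y := by
    show 0 < r - x
    linarith
  have htne : r - x ≠ 0 := by positivity
  have hrne : r ≠ 0 := ne_of_gt hrpos
  have hargne : x ^ 2 - 6 * y ≠ 0 := ne_of_gt harg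
  -- derivative in y
  have hτy : HasDerivAt (fun y' => Real.sqrt (x ^ 2 - 6 * y') - x) (-6 / (2 * r)) y := by
    have h1 : HasDerivAt (fun y' : ℝ => x ^ 2 - 6 * y') (-6) y := by
      simpa [Pi.sub_def] using (hasDerivAt_const y (x ^ 2)).sub ((hasDerivAt_id y).const_mul 6)
    have h2 := h1.sqrt hargne
    simpa using h2.sub_const x
  have hSy : HasDerivAt (fun y' => S x y')
      ((2/3) * ((0 * (r - x) - x ^ 2 * (-6 / (2 * r))) / (r - x) ^ 2 + -6 / (2 * r))) y := by
    have hdiv : HasDerivAt (fun y' => x ^ 2 / (Real.sqrt (x ^ 2 - 6 * y') - x))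
        ((0 * (r - x) - x ^ 2 * (-6 / (2 * r))) / (r - x) ^ 2) y :=
      (hasDerivAt_const y (x ^ 2)).div hτy htne
    exact (((hdiv.add hτy).const_mul (2/3)).sub_const (x / 3))
  -- derivative in x
  have hτx : HasDerivAt (fun x' => Real.sqrt (x' ^ 2 - 6 * y) - x') (2 * x / (2 * r) - 1) x := by
    have h1 : HasDerivAt (fun x' : ℝ => x' ^ 2 - 6 * y) (2 * x) x := by
      simpa using (hasDerivAt_pow 2 x).sub_const (6 * y)
    have h2 := h1.sqrt hargne
    simpa [Pi.sub_def] using h2.sub (hasDerivAt_id x)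
  have hSx : HasDerivAt (fun x' => S x' y)
      ((2/3) * ((2 * x * (r - x) - x ^ 2 * (2 * x / (2 * r) - 1)) / (r - x) ^ 2
        + (2 * x / (2 * r) - 1)) - 1/3) x := by
    have hpow : HasDerivAt (fun x' : ℝ => x' ^ 2) (2 * x) x := by
      simpa using hasDerivAt_pow 2 x
    have hdiv : HasDerivAt (fun x' => x' ^ 2 / (Real.sqrt (x' ^ 2 - 6 * y) - x'))
        ((2 * x * (r - x) - x ^ 2 * (2 * x / (2 * r) - 1)) / (r - x) ^ 2) x :=
      hpow.div hτx htne
    have h3 := ((hdiv.add hτx).const_mul (2/3)).sub ((hasDerivAt_id x).div_const 3)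
    simpa [Pi.sub_def] using h3
  refine ⟨htpos, ?_, ?_⟩
  · -- differentiability in both variables
    have h1 : DifferentiableAt ℝ (fun p : ℝ × ℝ => p.1 ^ 2 - 6 * p.2) (x, y) :=
      (differentiableAt_fst.pow 2).sub (differentiableAt_snd.const_mul 6)
    have h2 : DifferentiableAt ℝ (fun p : ℝ × ℝ => Real.sqrt (p.1 ^ 2 - 6 * p.2) - p.1) (x, y) :=
      (h1.sqrt hargne).sub differentiableAt_fst
    have hτne : Real.sqrt (x ^ 2 - 6 * y) - x ≠ 0 := by rw [← hrdef]; exact htne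
    have hτne2 : (fun p : ℝ × ℝ => Real.sqrt (p.1 ^ 2 - 6 * p.2) - p.1) (x, y) ≠ 0 := hτne
    have h3 : DifferentiableAt ℝ (fun p : ℝ × ℝ => p.1 ^ 2) (x, y) :=
      differentiableAt_fst.pow 2
    have h5 : DifferentiableAt ℝ
        (fun p : ℝ × ℝ => p.1 ^ 2 / (Real.sqrt (p.1 ^ 2 - 6 * p.2) - p.1)) (x, y) :=
      h3.mul (h2.inv hτne)
    have h6 : DifferentiableAt ℝ (fun p : ℝ × ℝ => p.1 / 3) (x, y) :=
      (differentiableAt_fst : DifferentiableAt ℝ (fun p : ℝ × ℝ => p.1) (x, y)).mul_const (3:ℝ)⁻¹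
    have h4 : DifferentiableAt ℝ
        (fun p : ℝ × ℝ => (2/3) * (p.1 ^ 2 / (Real.sqrt (p.1 ^ 2 - 6 * p.2) - p.1)
          + (Real.sqrt (p.1 ^ 2 - 6 * p.2) - p.1)) - p.1 / 3) (x, y) :=
      ((h5.add h2).const_mul (2/3)).sub h6
    exact h4
  · rw [hSy.deriv, hSx.deriv]
    have key : r * r = x ^ 2 - 6 * y := by nlinarith
    field_simp
    ring_nf
end

section
/- For x > 0 and y > −x²/6, define τ₊(x,y) = (x² + 6y)^{1/2} + x and S₊(x,y) = (2/3)(x²/τ₊(x,y) + τ₊(x,y)) + x/3. Then τ₊(x,y) > 0, S₊ is differentiable on {(x,y) : x > 0, y > −x²/6}, and S₊ satisfies the Hamilton–Jacobi equation −x ∂S₊/∂y + ½ (∂S₊/∂x)² = ½ there. -/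
/-- For `x > 0` and `y > −x²/6`, define `τ₊(x,y) = (x² + 6y)^(1/2) + x` and
`S₊(x,y) = (2/3)(x²/τ₊ + τ₊) + x/3`.  Then `τ₊(x,y) > 0`, `S₊` is differentiable on
`{(x,y) : x > 0, y > −x²/6}`, and `S₊` satisfies the Hamilton–Jacobi equation
`−x ∂S₊/∂y + ½ (∂S₊/∂x)² = ½` there. -/
theorem stmt_8 :
    let τ : ℝ → ℝ → ℝ := fun x y => Real.sqrt (x ^ 2 + 6 * y) + x
    let S : ℝ → ℝ → ℝ := fun x y => (2/3) * (x ^ 2 / τ x y + τ x y) + x / 3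
    ∀ x y : ℝ, 0 < x → -x ^ 2 / 6 < y →
      0 < τ x y ∧
      DifferentiableAt ℝ (fun p : ℝ × ℝ => S p.1 p.2) (x, y) ∧
      -x * deriv (fun y' => S x y') y
        + (1/2) * (deriv (fun x' => S x' y) x) ^ 2 = 1/2 := by
  intro τ S x y hx hy
  have hu : 0 < x ^ 2 + 6 * y := by nlinarith
  have hr : 0 < Real.sqrt (x ^ 2 + 6 * y) := Real.sqrt_pos.mpr hu
  set r := Real.sqrt (x ^ 2 + 6 * y) with hrdef
  have hτ : 0 < τ x y := by
    simp only [τ]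
    linarith
  have hτne : r + x ≠ 0 := by positivity
  have hrne : r ≠ 0 := ne_of_gt hr
  refine ⟨hτ, ?_, ?_⟩
  · -- differentiability of the two-variable map
    have hin : DifferentiableAt ℝ (fun p : ℝ × ℝ => p.1 ^ 2 + 6 * p.2) (x, y) := by
      fun_prop
    have hs : DifferentiableAt ℝ (fun p : ℝ × ℝ => Real.sqrt (p.1 ^ 2 + 6 * p.2)) (x, y) :=
      hin.sqrt hu.ne'
    have hτd : DifferentiableAt ℝ
        (fun p : ℝ × ℝ => Real.sqrt (p.1 ^ 2 + 6 * p.2) + p.1) (x, y) :=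
      hs.add (by fun_prop)
    have hnum : DifferentiableAt ℝ (fun p : ℝ × ℝ => p.1 ^ 2) (x, y) := by fun_prop
    have hdiv : DifferentiableAt ℝ
        (fun p : ℝ × ℝ => p.1 ^ 2 / (Real.sqrt (p.1 ^ 2 + 6 * p.2) + p.1)) (x, y) :=
      by
        have hinv : DifferentiableAt ℝ
            (fun p : ℝ × ℝ => (Real.sqrt (p.1 ^ 2 + 6 * p.2) + p.1)⁻¹) (x, y) :=
          hτd.inv hτne
        simp only [div_eq_mul_inv]
        exact hnum.mul hinv
    simp only [S, τ]
    exact ((hdiv.add hτd).const_mul (2/3)).add (by fun_prop)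
  · -- the Hamilton–Jacobi equation
    -- derivative in y
    have h1 : HasDerivAt (fun y' : ℝ => x ^ 2 + 6 * y') 6 y := by
      simpa using ((hasDerivAt_id y).const_mul 6).const_add (x ^ 2)
    have h2 : HasDerivAt (fun y' : ℝ => Real.sqrt (x ^ 2 + 6 * y')) (1 / (2 * r) * 6) y :=
      (Real.hasDerivAt_sqrt hu.ne').comp y h1
    have h3 : HasDerivAt (fun y' : ℝ => Real.sqrt (x ^ 2 + 6 * y') + x) (1 / (2 * r) * 6) y :=
      h2.add_const x
    have h4 : HasDerivAt (fun y' : ℝ => x ^ 2 / (Real.sqrt (x ^ 2 + 6 * y') + x))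
        ((0 * (r + x) - x ^ 2 * (1 / (2 * r) * 6)) / (r + x) ^ 2) y :=
      (hasDerivAt_const y (x ^ 2)).div h3 hτne
    have h5 : HasDerivAt (fun y' : ℝ =>
        (2/3) * (x ^ 2 / (Real.sqrt (x ^ 2 + 6 * y') + x)
          + (Real.sqrt (x ^ 2 + 6 * y') + x)) + x / 3)
        ((2/3) * ((0 * (r + x) - x ^ 2 * (1 / (2 * r) * 6)) / (r + x) ^ 2
          + 1 / (2 * r) * 6)) y :=
      ((h4.add h3).const_mul (2/3)).add_const (x / 3)
    have hdy : deriv (fun y' => S x y') y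
        = (2/3) * ((0 * (r + x) - x ^ 2 * (1 / (2 * r) * 6)) / (r + x) ^ 2
          + 1 / (2 * r) * 6) := by
      simp only [S, τ]
      exact h5.deriv
    -- derivative in x
    have g1 : HasDerivAt (fun x' : ℝ => x' ^ 2 + 6 * y) (2 * x) x := by
      simpa using (hasDerivAt_pow 2 x).add_const (6 * y)
    have g2 : HasDerivAt (fun x' : ℝ => Real.sqrt (x' ^ 2 + 6 * y))
        (1 / (2 * r) * (2 * x)) x :=
      (Real.hasDerivAt_sqrt hu.ne').comp x g1
    have g3 : HasDerivAt (fun x' : ℝ => Real.sqrt (x' ^ 2 + 6 * y) + x')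
        (1 / (2 * r) * (2 * x) + 1) x :=
      g2.add (hasDerivAt_id x)
    have gnum : HasDerivAt (fun x' : ℝ => x' ^ 2) (2 * x) x := by
      simpa using hasDerivAt_pow 2 x
    have g4 : HasDerivAt (fun x' : ℝ => x' ^ 2 / (Real.sqrt (x' ^ 2 + 6 * y) + x'))
        ((2 * x * (r + x) - x ^ 2 * (1 / (2 * r) * (2 * x) + 1)) / (r + x) ^ 2) x :=
      gnum.div g3 hτne
    have g6 : HasDerivAt (fun x' : ℝ => x' / 3) (1 / 3) x := by
      simpa using (hasDerivAt_id x).div_const 3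
    have g5 : HasDerivAt (fun x' : ℝ =>
        (2/3) * (x' ^ 2 / (Real.sqrt (x' ^ 2 + 6 * y) + x')
          + (Real.sqrt (x' ^ 2 + 6 * y) + x')) + x' / 3)
        ((2/3) * ((2 * x * (r + x) - x ^ 2 * (1 / (2 * r) * (2 * x) + 1)) / (r + x) ^ 2
          + (1 / (2 * r) * (2 * x) + 1)) + 1 / 3) x :=
      ((g4.add g3).const_mul (2/3)).add g6
    have hdx : deriv (fun x' => S x' y) x
        = (2/3) * ((2 * x * (r + x) - x ^ 2 * (1 / (2 * r) * (2 * x) + 1)) / (r + x) ^ 2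
          + (1 / (2 * r) * (2 * x) + 1)) + 1 / 3 := by
      simp only [S, τ]
      exact g5.deriv
    rw [hdy, hdx]
    field_simp
    ring
end

section
/- For x > 0 define τ₋(x,y) = (x² − 6y)^{1/2} − x, S₋(x,y) = (2/3)(x²/τ₋(x,y) + τ₋(x,y)) − x/3, τ₊(x,y) = (x² + 6y)^{1/2} + x, and S₊(x,y) = (2/3)(x²/τ₊(x,y) + τ₊(x,y)) + x/3. Then for every x > 0, the point y = −x²/(4√3) satisfies −x²/6 < −x²/(4√3) < 0, and S₊(x, −x²/(4√3)) = S₋(x, −x²/(4√3)) = √3 · x. -/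
/-- For `x > 0` define `τ₋, S₋, τ₊, S₊` as in the WKB action for linear flow.
Then for every `x > 0`, the point `y = −x²/(4√3)` satisfies `−x²/6 < −x²/(4√3) < 0`, and
`S₊(x, −x²/(4√3)) = S₋(x, −x²/(4√3)) = √3 · x`. -/
theorem stmt_9 :
    let τm : ℝ → ℝ → ℝ := fun x y => Real.sqrt (x ^ 2 - 6 * y) - x
    let Sm : ℝ → ℝ → ℝ := fun x y => (2/3) * (x ^ 2 / τm x y + τm x y) - x / 3
    let τp : ℝ → ℝ → ℝ := fun x y => Real.sqrt (x ^ 2 + 6 * y) + x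
    let Sp : ℝ → ℝ → ℝ := fun x y => (2/3) * (x ^ 2 / τp x y + τp x y) + x / 3
    ∀ x : ℝ, 0 < x →
      -x ^ 2 / 6 < -x ^ 2 / (4 * Real.sqrt 3) ∧
      -x ^ 2 / (4 * Real.sqrt 3) < 0 ∧
      Sp x (-x ^ 2 / (4 * Real.sqrt 3)) = Real.sqrt 3 * x ∧
      Sm x (-x ^ 2 / (4 * Real.sqrt 3)) = Real.sqrt 3 * x := by
  intro τm Sm τp Sp x hx
  set s := Real.sqrt 3 with hs
  have hs2 : s ^ 2 = 3 := Real.sq_sqrt (by norm_num)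
  have hs1 : 1 < s := by nlinarith [Real.sqrt_nonneg 3]
  have hslt : s < 2 := by nlinarith [Real.sqrt_nonneg 3]
  have hx2 : (0:ℝ) < x ^ 2 := by positivity
  have hsm : Real.sqrt (x ^ 2 - 6 * (-x ^ 2 / (4 * s))) = x * (s + 1) / 2 := by
    have h : x ^ 2 - 6 * (-x ^ 2 / (4 * s)) = (x * (s + 1) / 2) ^ 2 := by
      field_simp
      nlinarith
    rw [h, Real.sqrt_sq (by positivity)]
  have hsp : Real.sqrt (x ^ 2 + 6 * (-x ^ 2 / (4 * s))) = x * (s - 1) / 2 := by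
    have h : x ^ 2 + 6 * (-x ^ 2 / (4 * s)) = (x * (s - 1) / 2) ^ 2 := by
      field_simp
      nlinarith
    rw [h, Real.sqrt_sq (by nlinarith)]
  have hs0 : (0:ℝ) < s - 1 := by linarith
  have hs4 : (0:ℝ) < 4 * s := by linarith
  refine ⟨?_, ?_, ?_, ?_⟩
  · rw [div_lt_div_iff₀ (by norm_num) hs4]
    nlinarith
  · apply div_neg_of_neg_of_pos (by nlinarith) hs4
  · show (2/3) * (x ^ 2 / (Real.sqrt (x ^ 2 + 6 * (-x ^ 2 / (4 * s))) + x)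
      + (Real.sqrt (x ^ 2 + 6 * (-x ^ 2 / (4 * s))) + x)) + x / 3 = s * x
    rw [hsp]
    have h1 : x * (s - 1) / 2 + x = x * (s + 1) / 2 := by ring
    rw [h1]
    have hne : x * (s + 1) ≠ 0 := by positivity
    field_simp
    nlinarith
  · show (2/3) * (x ^ 2 / (Real.sqrt (x ^ 2 - 6 * (-x ^ 2 / (4 * s))) - x)
      + (Real.sqrt (x ^ 2 - 6 * (-x ^ 2 / (4 * s))) - x)) - x / 3 = s * x
    rw [hsm]
    have h0 : x * (s + 1) / 2 - x = x * (s - 1) / 2 := by ring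
    rw [h0]
    have hne : x * (s - 1) ≠ 0 := by positivity
    field_simp
    nlinarith
end

section
/- Let v : ℝ → ℝ be continuously differentiable with v > 0 on an open interval J, let U ⊆ ℝ² be open, let S₀ : U → ℝ be twice continuously differentiable and satisfy −v(x) ∂S₀/∂y + ½(∂S₀/∂x)² = ½ on U, and let a₀ : J → ℝ be differentiable with (x, a₀(x)) ∈ U and ∂S₀/∂x(x, a₀(x)) = 0 for all x ∈ J. Then for all x ∈ J: (i) ∂S₀/∂y(x, a₀(x)) = −1/(2v(x)); (ii) ∂²S₀/∂x∂y(x, a₀(x)) = v′(x)/(2v(x)²) = −(d/dx)(1/(2v(x))); and (iii) ∂²S₀/∂x²(x, a₀(x)) = a₀′(x) · (d/dx)(1/(2v(x))). -/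
/-- Let `v` be `C¹` with `v > 0` on an open interval `J`, `U ⊆ ℝ²` open,
`S₀ : U → ℝ` twice continuously differentiable satisfying the Hamilton–Jacobi equation
`−v(x) ∂S₀/∂y + ½(∂S₀/∂x)² = ½` on `U`, and `a₀ : J → ℝ` differentiable with
`(x, a₀ x) ∈ U` and `∂S₀/∂x(x, a₀ x) = 0` on `J`.  Then for all `x ∈ J`:
(i) `∂S₀/∂y(x, a₀ x) = −1/(2v(x))`;
(ii) `∂²S₀/∂x∂y(x, a₀ x) = v′(x)/(2v(x)²) = −(d/dx)(1/(2v(x)))`;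
(iii) `∂²S₀/∂x²(x, a₀ x) = a₀′(x) · (d/dx)(1/(2v(x)))`. -/
theorem stmt_16 (v : ℝ → ℝ) (hv : ContDiff ℝ 1 v)
    (J : Set ℝ) (hJopen : IsOpen J) (hJconv : Convex ℝ J)
    (hvpos : ∀ x ∈ J, 0 < v x)
    (U : Set (ℝ × ℝ)) (hU : IsOpen U)
    (S₀ : ℝ → ℝ → ℝ)
    (hS₀ : ContDiffOn ℝ 2 (fun p : ℝ × ℝ => S₀ p.1 p.2) U)
    (hHJ : ∀ x y : ℝ, (x, y) ∈ U →
      -(v x) * deriv (fun y' => S₀ x y') y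
        + (1/2) * (deriv (fun x' => S₀ x' y) x) ^ 2 = 1/2)
    (a₀ : ℝ → ℝ) (hmem : ∀ x ∈ J, (x, a₀ x) ∈ U)
    (hdiff : DifferentiableOn ℝ a₀ J)
    (hcrit : ∀ x ∈ J, deriv (fun x' => S₀ x' (a₀ x)) x = 0) :
    ∀ x ∈ J,
      deriv (fun y' => S₀ x y') (a₀ x) = -1 / (2 * v x) ∧
      deriv (fun x' => deriv (fun y' => S₀ x' y') (a₀ x)) x
        = deriv v x / (2 * (v x) ^ 2) ∧
      deriv (fun x' => deriv (fun y' => S₀ x' y') (a₀ x)) x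
        = -deriv (fun x' => 1 / (2 * v x')) x ∧
      deriv (fun x' => deriv (fun x'' => S₀ x'' (a₀ x)) x') x
        = deriv a₀ x * deriv (fun x' => 1 / (2 * v x')) x := by
  intro x hx
  have hxU : (x, a₀ x) ∈ U := hmem x hx
  have hvx : 0 < v x := hvpos x hx
  have hvd : ∀ t : ℝ, HasDerivAt v (deriv v t) t := fun t =>
    ((hv.differentiable one_ne_zero) t).hasDerivAt
  -- partial derivatives as fderiv applications
  have hdx : ∀ a b : ℝ, (a, b) ∈ U →
      HasDerivAt (fun x' => S₀ x' b)
        (fderiv ℝ (fun p : ℝ × ℝ => S₀ p.1 p.2) (a, b) (1, 0)) a := by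
    intro a b hab
    have hdiffS : DifferentiableAt ℝ (fun p : ℝ × ℝ => S₀ p.1 p.2) (a, b) :=
      (hS₀.contDiffAt (hU.mem_nhds hab)).differentiableAt two_ne_zero
    have hc : HasDerivAt (fun x' : ℝ => ((x' : ℝ), b)) ((1 : ℝ), (0 : ℝ)) a :=
      (hasDerivAt_id a).prodMk (hasDerivAt_const a b)
    exact hdiffS.hasFDerivAt.comp_hasDerivAt a hc
  have hdy : ∀ a b : ℝ, (a, b) ∈ U →
      HasDerivAt (fun y' => S₀ a y')
        (fderiv ℝ (fun p : ℝ × ℝ => S₀ p.1 p.2) (a, b) (0, 1)) b := by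
    intro a b hab
    have hdiffS : DifferentiableAt ℝ (fun p : ℝ × ℝ => S₀ p.1 p.2) (a, b) :=
      (hS₀.contDiffAt (hU.mem_nhds hab)).differentiableAt two_ne_zero
    have hc : HasDerivAt (fun y' : ℝ => (a, (y' : ℝ))) ((0 : ℝ), (1 : ℝ)) b :=
      (hasDerivAt_const b a).prodMk (hasDerivAt_id b)
    exact hdiffS.hasFDerivAt.comp_hasDerivAt b hc
  have hfx0 : deriv (fun x' => S₀ x' (a₀ x)) x = 0 := hcrit x hx
  -- (i)
  have hi : deriv (fun y' => S₀ x y') (a₀ x) = -1 / (2 * v x) := by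
    have hHJx := hHJ x (a₀ x) hxU
    rw [hfx0] at hHJx
    field_simp at hHJx ⊢
    nlinarith [hHJx]
  -- second derivative setup
  have hS2 : ContDiffAt ℝ 2 (fun p : ℝ × ℝ => S₀ p.1 p.2) (x, a₀ x) :=
    hS₀.contDiffAt (hU.mem_nhds hxU)
  have hΦc : ContDiffAt ℝ 1 (fderiv ℝ (fun p : ℝ × ℝ => S₀ p.1 p.2)) (x, a₀ x) :=
    hS2.fderiv_right (by norm_num)
  have hΦd : HasFDerivAt (fderiv ℝ (fun p : ℝ × ℝ => S₀ p.1 p.2))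
      (fderiv ℝ (fderiv ℝ (fun p : ℝ × ℝ => S₀ p.1 p.2)) (x, a₀ x)) (x, a₀ x) :=
    (hΦc.differentiableAt one_ne_zero).hasFDerivAt
  set Φ := fderiv ℝ (fun p : ℝ × ℝ => S₀ p.1 p.2) with hΦdef
  set D2 := fderiv ℝ Φ (x, a₀ x) with hD2def
  -- derivatives of partials along horizontal line
  have hc1 : HasDerivAt (fun x' : ℝ => ((x' : ℝ), a₀ x)) ((1 : ℝ), (0 : ℝ)) x :=
    (hasDerivAt_id x).prodMk (hasDerivAt_const x (a₀ x))
  have hA0 : HasDerivAt (fun x' => Φ (x', a₀ x)) (D2 (1, 0)) x :=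
    hΦd.comp_hasDerivAt x hc1
  have hA : HasDerivAt (fun x' => Φ (x', a₀ x) ((1 : ℝ), (0 : ℝ))) (D2 (1, 0) (1, 0)) x := by
    simpa using hA0.clm_apply (hasDerivAt_const x ((1 : ℝ), (0 : ℝ)))
  have hB : HasDerivAt (fun x' => Φ (x', a₀ x) ((0 : ℝ), (1 : ℝ))) (D2 (1, 0) (0, 1)) x := by
    simpa using hA0.clm_apply (hasDerivAt_const x ((0 : ℝ), (1 : ℝ)))
  -- eventual facts
  have hevU : ∀ᶠ x' in nhds x, ((x' : ℝ), a₀ x) ∈ U :=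
    ((continuous_id.prodMk continuous_const).continuousAt).eventually_mem (hU.mem_nhds hxU)
  have hevJ : ∀ᶠ x' in nhds x, x' ∈ J := hJopen.mem_nhds hx
  have hgev : (fun x' => deriv (fun y' => S₀ x' y') (a₀ x)) =ᶠ[nhds x]
      (fun x' => Φ (x', a₀ x) ((0 : ℝ), (1 : ℝ))) := by
    filter_upwards [hevU] with x' hx'
    exact (hdy x' (a₀ x) hx').deriv
  have hfev : (fun x' => deriv (fun x'' => S₀ x'' (a₀ x)) x') =ᶠ[nhds x]
      (fun x' => Φ (x', a₀ x) ((1 : ℝ), (0 : ℝ))) := by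
    filter_upwards [hevU] with x' hx'
    exact (hdx x' (a₀ x) hx').deriv
  have hgd : HasDerivAt (fun x' => deriv (fun y' => S₀ x' y') (a₀ x)) (D2 (1, 0) (0, 1)) x :=
    hB.congr_of_eventuallyEq hgev
  have hfd : HasDerivAt (fun x' => deriv (fun x'' => S₀ x'' (a₀ x)) x') (D2 (1, 0) (1, 0)) x :=
    hA.congr_of_eventuallyEq hfev
  -- derivative along the curve x' ↦ (x', a₀ x')
  have ha₀ : HasDerivAt a₀ (deriv a₀ x) x :=
    (hdiff.differentiableAt (hJopen.mem_nhds hx)).hasDerivAt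
  have hγ : HasDerivAt (fun x' : ℝ => ((x' : ℝ), a₀ x')) ((1 : ℝ), deriv a₀ x) x :=
    (hasDerivAt_id x).prodMk ha₀
  have hF0 : HasDerivAt (fun x' => Φ (x', a₀ x')) (D2 (1, deriv a₀ x)) x :=
    hΦd.comp_hasDerivAt x hγ
  have hF : HasDerivAt (fun x' => Φ (x', a₀ x') ((1 : ℝ), (0 : ℝ)))
      (D2 (1, deriv a₀ x) (1, 0)) x := by
    simpa using hF0.clm_apply (hasDerivAt_const x ((1 : ℝ), (0 : ℝ)))
  have hFzero : (fun x' => Φ (x', a₀ x') ((1 : ℝ), (0 : ℝ))) =ᶠ[nhds x]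
      (fun _ => (0 : ℝ)) := by
    filter_upwards [hevJ] with x' hx'
    have h1 := (hdx x' (a₀ x') (hmem x' hx')).deriv
    rw [hcrit x' hx'] at h1
    exact h1.symm
  have hFc : HasDerivAt (fun x' => Φ (x', a₀ x') ((1 : ℝ), (0 : ℝ))) 0 x :=
    (hasDerivAt_const x (0 : ℝ)).congr_of_eventuallyEq hFzero
  have hchain : D2 (1, deriv a₀ x) (1, 0) = 0 := hF.unique hFc
  have hlin : D2 (1, deriv a₀ x) ((1 : ℝ), (0 : ℝ))
      = D2 (1, 0) (1, 0) + deriv a₀ x * D2 (0, 1) (1, 0) := by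
    have h : ((1 : ℝ), deriv a₀ x) = ((1 : ℝ), (0 : ℝ)) + deriv a₀ x • ((0 : ℝ), (1 : ℝ)) := by
      simp [Prod.ext_iff]
    rw [h, map_add, map_smul]
    simp [smul_eq_mul]
  -- Clairaut
  have hsym : IsSymmSndFDerivAt ℝ (fun p : ℝ × ℝ => S₀ p.1 p.2) (x, a₀ x) :=
    hS2.isSymmSndFDerivAt (by simp)
  have hswap : D2 (0, 1) (1, 0) = D2 (1, 0) (0, 1) := hsym (0, 1) (1, 0)
  -- compute D2 (1,0) (0,1) from the HJ equation
  have hgeq : (fun x' => deriv (fun y' => S₀ x' y') (a₀ x)) =ᶠ[nhds x]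
      (fun x' => ((deriv (fun x'' => S₀ x'' (a₀ x)) x') ^ 2 - 1) / (2 * v x')) := by
    filter_upwards [hevU, hevJ] with x' h1 h2
    have hhj := hHJ x' (a₀ x) h1
    have hvne : (2 * v x') ≠ 0 := (mul_pos two_pos (hvpos x' h2)).ne'
    rw [eq_div_iff hvne]
    nlinarith [hhj]
  have hq : HasDerivAt
      (fun x' => ((deriv (fun x'' => S₀ x'' (a₀ x)) x') ^ 2 - 1) / (2 * v x'))
      (((2 * deriv (fun x'' => S₀ x'' (a₀ x)) x ^ 1 * D2 (1, 0) (1, 0)) * (2 * v x)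
        - ((deriv (fun x'' => S₀ x'' (a₀ x)) x) ^ 2 - 1) * (2 * deriv v x)) / (2 * v x) ^ 2) x := by
    have hnum : HasDerivAt (fun x' => (deriv (fun x'' => S₀ x'' (a₀ x)) x') ^ 2 - 1)
        (2 * deriv (fun x'' => S₀ x'' (a₀ x)) x ^ 1 * D2 (1, 0) (1, 0)) x := by
      simpa using (hfd.pow 2).sub_const 1
    have hden : HasDerivAt (fun x' => 2 * v x') (2 * deriv v x) x := (hvd x).const_mul 2
    exact hnum.div hden (mul_pos two_pos hvx).ne'
  have hBval : D2 (1, 0) (0, 1) = deriv v x / (2 * v x ^ 2) := by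
    have := hgd.unique (hq.congr_of_eventuallyEq hgeq)
    rw [this, hfx0]
    field_simp
    ring
  -- derivative of 1/(2v)
  have h2v : HasDerivAt (fun x' => 1 / (2 * v x')) (-(2 * deriv v x) / (2 * v x) ^ 2) x := by
    rw [show (fun x' => 1 / (2 * v x')) = (fun y => 2 * v y)⁻¹ from by funext y; simp]
    exact ((hvd x).const_mul 2).inv (by positivity : (2 * v x) ≠ 0)
  refine ⟨hi, ?_, ?_, ?_⟩
  · rw [hgd.deriv, hBval]
  · rw [hgd.deriv, hBval, h2v.deriv]
    field_simp
  · rw [hfd.deriv, h2v.deriv]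
    have hAval : D2 (1, 0) (1, 0) = -(deriv a₀ x * (deriv v x / (2 * v x ^ 2))) := by
      rw [hlin, hswap, hBval] at hchain
      linarith
    rw [hAval]
    field_simp
end
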